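/- Let $A \in \mathbb{R}^{n \times n}$, $B \in \mathbb{R}^{n \times m}$, $C \in \mathbb{R}^{m \times n}$, $D \in \mathbb{R}^{m \times m}$, and suppose $X \in \mathbb{R}^{n \times n}$ is symmetric positive definite and satisfies $\begin{pmatrix} A^\top X + XA & XB & C^\top \\ B^\top X & -I_m & D^\top \\ C & D & -I_m \end{pmatrix} \preceq 0$. Define $J = \tfrac{1}{2}(AX^{-1} - (AX^{-1})^\top)$, $R = -\tfrac{1}{2}(AX^{-1} + (AX^{-1})^\top)$, $Q = X$, $F = \tfrac{1}{2}(B + X^{-1}C^\top)$, $P = \tfrac{1}{2}(-B + X^{-1}C^\top)$. Then $J^\top = -J$, $Q \succ 0$, $(J-R)Q = A$, $F - P = B$, $(F+P)^\top Q = C$, and $K_s = \begin{pmatrix} 2R & -(F-P) & -(F+P) \\ -(F-P)^\top & I_m & -D^\top \\ -(F+P)^\top & -D & I_m \end{pmatrix} \succeq 0$. -/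

import Mathlib

open Matrix

/-!
Conjugating `-BRmat` by `diag(X⁻¹, I, I)` gives exactly `K_s`
(the `(1,1)` block becomes `-(X⁻¹Aᵀ + AX⁻¹) = 2R`), and congruence preserves
positive semidefiniteness.
-/

/-- 3x3 block matrix with block sizes n, m, m. -/
def blk3 (n m : ℕ) (M11 : Matrix (Fin n) (Fin n) ℝ) (M12 M13 : Matrix (Fin n) (Fin m) ℝ)
    (M21 M31 : Matrix (Fin m) (Fin n) ℝ) (M22 M23 M32 M33 : Matrix (Fin m) (Fin m) ℝ) :
    Matrix (Fin n ⊕ (Fin m ⊕ Fin m)) (Fin n ⊕ (Fin m ⊕ Fin m)) ℝ :=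
  Matrix.fromBlocks M11 (Matrix.fromCols M12 M13) (Matrix.fromRows M21 M31)
    (Matrix.fromBlocks M22 M23 M32 M33)

/-- The scattering pH matrix K_s. -/
def Ksmat (n m : ℕ) (R : Matrix (Fin n) (Fin n) ℝ) (F P : Matrix (Fin n) (Fin m) ℝ)
    (D : Matrix (Fin m) (Fin m) ℝ) :
    Matrix (Fin n ⊕ (Fin m ⊕ Fin m)) (Fin n ⊕ (Fin m ⊕ Fin m)) ℝ :=
  blk3 n m ((2 : ℝ) • R) (-(F - P)) (-(F + P)) (-(F - P)ᵀ) (-(F + P)ᵀ) 1 (-Dᵀ) (-D) 1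

/-- The bounded-real LMI matrix. -/
def BRmat (n m : ℕ) (A : Matrix (Fin n) (Fin n) ℝ) (B : Matrix (Fin n) (Fin m) ℝ)
    (C : Matrix (Fin m) (Fin n) ℝ) (D : Matrix (Fin m) (Fin m) ℝ)
    (X : Matrix (Fin n) (Fin n) ℝ) :
    Matrix (Fin n ⊕ (Fin m ⊕ Fin m)) (Fin n ⊕ (Fin m ⊕ Fin m)) ℝ :=
  blk3 n m (Aᵀ * X + X * A) (X * B) Cᵀ (Bᵀ * X) C (-1) Dᵀ D (-1)

section Congruence

variable {n m : ℕ}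

theorem neg_blk3 (M11 : Matrix (Fin n) (Fin n) ℝ) (M12 M13 : Matrix (Fin n) (Fin m) ℝ)
    (M21 M31 : Matrix (Fin m) (Fin n) ℝ) (M22 M23 M32 M33 : Matrix (Fin m) (Fin m) ℝ) :
    -blk3 n m M11 M12 M13 M21 M31 M22 M23 M32 M33 =
      blk3 n m (-M11) (-M12) (-M13) (-M21) (-M31) (-M22) (-M23) (-M32) (-M33) := by
  simp only [blk3, fromBlocks_neg, fromCols_neg, fromRows_neg]

theorem fromBlocks_mul_blk3_mul_transpose (T M11 : Matrix (Fin n) (Fin n) ℝ)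
    (M12 M13 : Matrix (Fin n) (Fin m) ℝ) (M21 M31 : Matrix (Fin m) (Fin n) ℝ)
    (M22 M23 M32 M33 : Matrix (Fin m) (Fin m) ℝ) :
    fromBlocks T 0 0 1 * blk3 n m M11 M12 M13 M21 M31 M22 M23 M32 M33 *
        (fromBlocks T 0 0 1)ᵀ =
      blk3 n m (T * M11 * Tᵀ) (T * M12) (T * M13) (M21 * Tᵀ) (M31 * Tᵀ) M22 M23 M32 M33 := by
  simp only [blk3, fromBlocks_transpose, transpose_zero, transpose_one, fromBlocks_multiply,
    Matrix.zero_mul, Matrix.mul_zero, Matrix.one_mul, Matrix.mul_one, add_zero, zero_add,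
    mul_fromCols, fromRows_mul]

theorem Ksmat_eq_fromBlocks_mul_neg_BRmat_mul_transpose {A X R : Matrix (Fin n) (Fin n) ℝ}
    {B F P : Matrix (Fin n) (Fin m) ℝ} {C : Matrix (Fin m) (Fin n) ℝ}
    (D : Matrix (Fin m) (Fin m) ℝ)
    (hX : IsUnit X.det) (hXinv : X⁻¹ᵀ = X⁻¹) (hR : (2 : ℝ) • R = -(A * X⁻¹ + X⁻¹ * Aᵀ))
    (hFsubP : F - P = B) (hFaddP : F + P = X⁻¹ * Cᵀ) :
    Ksmat n m R F P D =
      fromBlocks X⁻¹ 0 0 1 * -BRmat n m A B C D X * (fromBlocks X⁻¹ 0 0 1)ᵀ := by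
  rw [BRmat, neg_blk3, fromBlocks_mul_blk3_mul_transpose, Ksmat, hXinv, hR, hFsubP, hFaddP,
    transpose_mul, transpose_transpose, hXinv]
  congr 1
  · rw [Matrix.mul_neg, Matrix.neg_mul, Matrix.mul_add, Matrix.add_mul,
      nonsing_inv_mul_cancel_left _ _ hX, ← Matrix.mul_assoc, mul_nonsing_inv_cancel_right _ _ hX,
      add_comm]
  · rw [Matrix.mul_neg, nonsing_inv_mul_cancel_left _ _ hX]
  · rw [Matrix.mul_neg]
  · rw [Matrix.neg_mul, mul_nonsing_inv_cancel_right _ _ hX]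
  · rw [Matrix.neg_mul]
  all_goals rw [neg_neg]

end Congruence

theorem stmt1 (n m : ℕ)
    (A : Matrix (Fin n) (Fin n) ℝ) (B : Matrix (Fin n) (Fin m) ℝ)
    (C : Matrix (Fin m) (Fin n) ℝ) (D : Matrix (Fin m) (Fin m) ℝ)
    (X : Matrix (Fin n) (Fin n) ℝ) (hX : X.PosDef)
    (hLMI : (-(BRmat n m A B C D X)).PosSemidef) :
    let J := ((1 : ℝ) / 2) • (A * X⁻¹ - (A * X⁻¹)ᵀ)
    let R := -(((1 : ℝ) / 2) • (A * X⁻¹ + (A * X⁻¹)ᵀ))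
    let Q := X
    let F := ((1 : ℝ) / 2) • (B + X⁻¹ * Cᵀ)
    let P := ((1 : ℝ) / 2) • (-B + X⁻¹ * Cᵀ)
    Jᵀ = -J ∧ Q.PosDef ∧ (J - R) * Q = A ∧ F - P = B ∧ (F + P)ᵀ * Q = C ∧
      (Ksmat n m R F P D).PosSemidef := by
  intro J R Q F P
  have hdet : IsUnit X.det := (isUnit_iff_isUnit_det X).mp hX.isUnit
  have hXsymm : Xᵀ = X := hX.isHermitian.eq
  have hXinv : X⁻¹ᵀ = X⁻¹ := by rw [transpose_nonsing_inv, hXsymm]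
  have hJ : Jᵀ = -J := by
    simp only [J, transpose_smul, transpose_sub, transpose_transpose]
    module
  have hJsubR : J - R = A * X⁻¹ := by module
  have hFsubP : F - P = B := by module
  have hFaddP : F + P = X⁻¹ * Cᵀ := by module
  have hR : (2 : ℝ) • R = -(A * X⁻¹ + X⁻¹ * Aᵀ) := by
    simp only [R, transpose_mul, hXinv]
    module
  refine ⟨hJ, hX, ?_, hFsubP, ?_, ?_⟩
  · rw [hJsubR, nonsing_inv_mul_cancel_right _ _ hdet]
  · rw [hFaddP, transpose_mul, transpose_transpose, hXinv, nonsing_inv_mul_cancel_right _ _ hdet]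
  · rw [Ksmat_eq_fromBlocks_mul_neg_BRmat_mul_transpose D hdet hXinv hR hFsubP hFaddP,
      ← conjTranspose_eq_transpose_of_trivial]
    exact hLMI.mul_mul_conjTranspose_same _
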